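/- arXiv:2101.05231 — 2 statements merged into one kernel-verified Lean document; each statement's English description precedes it below -/
import Mathlib

section
/- Let L ∈ ℝ^{m×n} have rank r, compact SVD L = W Σ Vᵀ, satisfy μ₂-row incoherence max_i ‖Vᵀeᵢ‖₂ ≤ √(μ₂ r/n), and let J ⊆ [n] be such that C = L(:,J) has rank r. Then the spectral condition number satisfies κ(C) ≤ √(μ₂ r) · κ(L) · √(|J|/n) · ‖(V(J,:))†‖₂. -/
open Matrix BigOperators MeasureTheory

noncomputable def specNorm {m n : ℕ} (A : Matrix (Fin m) (Fin n) ℝ) : ℝ :=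
  ‖LinearMap.toContinuousLinearMap (Matrix.toEuclideanLin A)‖

def IsMPInv {m n : ℕ} (A : Matrix (Fin m) (Fin n) ℝ) (B : Matrix (Fin n) (Fin m) ℝ) : Prop :=
  A * B * A = A ∧ B * A * B = B ∧ (A * B)ᵀ = A * B ∧ (B * A)ᵀ = B * A

noncomputable def rowNorm {m n : ℕ} (A : Matrix (Fin m) (Fin n) ℝ) (i : Fin m) : ℝ :=
  Real.sqrt (∑ j, (A i j) ^ 2)

noncomputable def entryMax {m n : ℕ} (A : Matrix (Fin m) (Fin n) ℝ) : ℝ :=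
  ⨆ i, ⨆ j, |A i j|

open scoped Matrix.Norms.L2Operator

lemma specNorm_eq_l2 {m n : ℕ} (A : Matrix (Fin m) (Fin n) ℝ) : specNorm A = ‖A‖ := rfl

lemma l2_transpose {m n : ℕ} (A : Matrix (Fin m) (Fin n) ℝ) : ‖Aᵀ‖ = ‖A‖ := by
  rw [← Matrix.conjTranspose_eq_transpose_of_trivial]
  exact Matrix.l2_opNorm_conjTranspose A

lemma specNorm_le_bound {m n : ℕ} (A : Matrix (Fin m) (Fin n) ℝ) (c : ℝ) (hc : 0 ≤ c)
    (h : ∀ x : EuclideanSpace ℝ (Fin n),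
      ‖(EuclideanSpace.equiv (Fin m) ℝ).symm (A *ᵥ x)‖ ≤ c * ‖x‖) : ‖A‖ ≤ c := by
  rw [Matrix.l2_opNorm_def]
  exact ContinuousLinearMap.opNorm_le_bound _ hc h

lemma enorm_eq {m : ℕ} (v : Fin m → ℝ) :
    ‖(EuclideanSpace.equiv (Fin m) ℝ).symm v‖ = Real.sqrt (v ⬝ᵥ v) := by
  rw [EuclideanSpace.norm_eq]; congr 1; simp [dotProduct, sq_abs, sq]

lemma enorm_eq' {m : ℕ} (x : EuclideanSpace ℝ (Fin m)) :
    ‖x‖ = Real.sqrt ((fun i => x i) ⬝ᵥ (fun i => x i)) := enorm_eq (fun i => x i)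

lemma norm_le_one_of_orth {m r : ℕ} (W : Matrix (Fin m) (Fin r) ℝ) (hW : Wᵀ * W = 1) :
    ‖W‖ ≤ 1 := by
  apply specNorm_le_bound _ _ zero_le_one
  intro x
  rw [one_mul, enorm_eq, enorm_eq']
  have key : (W *ᵥ x) ⬝ᵥ (W *ᵥ x) = (fun i => x i) ⬝ᵥ (fun i => x i) := by
    rw [Matrix.dotProduct_mulVec, ← Matrix.mulVec_transpose, Matrix.mulVec_mulVec, hW,
      Matrix.one_mulVec]
  rw [key]

lemma norm_le_of_rows {m n : ℕ} (A : Matrix (Fin m) (Fin n) ℝ) (b : ℝ) (hb : 0 ≤ b)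
    (h : ∀ i, rowNorm A i ≤ b) : ‖A‖ ≤ Real.sqrt m * b := by
  apply specNorm_le_bound _ _ (by positivity)
  intro x
  rw [enorm_eq, enorm_eq']
  have hx0 : (0:ℝ) ≤ (fun i => x i) ⬝ᵥ (fun i => x i) :=
    Finset.sum_nonneg fun j _ => mul_self_nonneg _
  have key : (A *ᵥ x) ⬝ᵥ (A *ᵥ x) ≤ (m : ℝ) * b^2 * ((fun i => x i) ⬝ᵥ (fun i => x i)) := by
    simp only [dotProduct, Matrix.mulVec]
    have row : ∀ i : Fin m, (∑ j, A i j * x j) * (∑ j, A i j * x j)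
        ≤ b^2 * (∑ j, x j * x j) := by
      intro i
      have cs := Finset.sum_mul_sq_le_sq_mul_sq Finset.univ (fun j => A i j) (fun j => x j)
      have hrow : (∑ j, (A i j)^2) ≤ b^2 := by
        have h1 := h i
        have h2 : (0:ℝ) ≤ ∑ j, (A i j)^2 := by positivity
        calc (∑ j, (A i j)^2) = (rowNorm A i)^2 := by rw [rowNorm, Real.sq_sqrt h2]
          _ ≤ b^2 := by
              apply sq_le_sq' _ h1
              have h3 : 0 ≤ rowNorm A i := Real.sqrt_nonneg _
              linarith
      calc (∑ j, A i j * x j) * (∑ j, A i j * x j) = (∑ j, A i j * x j)^2 := (sq _).symm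
        _ ≤ (∑ j, (A i j)^2) * (∑ j, (x j)^2) := cs
        _ ≤ b^2 * (∑ j, (x j)^2) := mul_le_mul_of_nonneg_right hrow (by positivity)
        _ = b^2 * (∑ j, x j * x j) := by simp [sq]
    calc (∑ i, (∑ j, A i j * x j) * (∑ j, A i j * x j))
        ≤ ∑ _i : Fin m, b^2 * (∑ j, x j * x j) := Finset.sum_le_sum (fun i _ => row i)
      _ = (m : ℝ) * b^2 * (∑ j, x j * x j) := by
          rw [Finset.sum_const, Finset.card_univ, Fintype.card_fin, nsmul_eq_mul]; ring
  calc Real.sqrt ((A *ᵥ x) ⬝ᵥ (A *ᵥ x))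
      ≤ Real.sqrt ((m:ℝ) * b^2 * ((fun i => x i) ⬝ᵥ (fun i => x i))) := Real.sqrt_le_sqrt key
    _ = Real.sqrt m * b * Real.sqrt ((fun i => x i) ⬝ᵥ (fun i => x i)) := by
        rw [Real.sqrt_mul (by positivity), Real.sqrt_mul (by positivity), Real.sqrt_sq hb]

lemma mpinv_unique {m n : ℕ} {A : Matrix (Fin m) (Fin n) ℝ} {B B' : Matrix (Fin n) (Fin m) ℝ}
    (h : IsMPInv A B) (h' : IsMPInv A B') : B = B' := by
  obtain ⟨h1, h2, h3, h4⟩ := h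
  obtain ⟨h1', h2', h3', h4'⟩ := h'
  have e1 : A * B = A * B' := by
    calc A * B = (A * B)ᵀ := h3.symm
      _ = Bᵀ * Aᵀ := Matrix.transpose_mul A B
      _ = Bᵀ * (A * B' * A)ᵀ := by rw [h1']
      _ = Bᵀ * (Aᵀ * (A * B')ᵀ) := by rw [Matrix.transpose_mul (A * B') A]
      _ = (Bᵀ * Aᵀ) * (A * B') := by rw [h3', ← Matrix.mul_assoc]
      _ = (A * B)ᵀ * (A * B') := by rw [← Matrix.transpose_mul]
      _ = (A * B) * (A * B') := by rw [h3]
      _ = (A * B * A) * B' := (Matrix.mul_assoc (A*B) A B').symm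
      _ = A * B' := by rw [h1]
  have e2 : B * A = B' * A := by
    calc B * A = (B * A)ᵀ := h4.symm
      _ = Aᵀ * Bᵀ := Matrix.transpose_mul B A
      _ = (A * B' * A)ᵀ * Bᵀ := by rw [h1']
      _ = (A * (B' * A))ᵀ * Bᵀ := by rw [Matrix.mul_assoc]
      _ = ((B' * A)ᵀ * Aᵀ) * Bᵀ := by rw [Matrix.transpose_mul]
      _ = (B' * A) * (Aᵀ * Bᵀ) := by rw [h4', Matrix.mul_assoc]
      _ = (B' * A) * (B * A)ᵀ := by rw [← Matrix.transpose_mul]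
      _ = (B' * A) * (B * A) := by rw [h4]
      _ = B' * (A * (B * A)) := Matrix.mul_assoc B' A (B*A)
      _ = B' * (A * B * A) := by rw [Matrix.mul_assoc]
      _ = B' * A := by rw [h1]
  calc B = B * A * B := h2.symm
    _ = B' * A * B := by rw [e2]
    _ = B' * (A * B') := by rw [Matrix.mul_assoc, e1]
    _ = B' := by rw [← Matrix.mul_assoc, h2']

lemma isUnit_of_rank_eq {r : ℕ} (M : Matrix (Fin r) (Fin r) ℝ) (h : M.rank = r) : IsUnit M := by
  rw [← Matrix.mulVec_surjective_iff_isUnit]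
  have hrange : LinearMap.range M.mulVecLin = ⊤ := by
    apply Submodule.eq_top_of_finrank_eq
    rw [← Matrix.rank, h, Module.finrank_fin_fun]
  intro y
  have hy : y ∈ LinearMap.range M.mulVecLin := hrange ▸ Submodule.mem_top
  obtain ⟨x, hx⟩ := hy
  exact ⟨x, hx⟩

lemma submatrix_mul_right {m n k p : ℕ} (A : Matrix (Fin m) (Fin p) ℝ)
    (B : Matrix (Fin p) (Fin n) ℝ) (g : Fin k → Fin n) :
    (A * B).submatrix id g = A * B.submatrix id g := by
  ext i j; simp [Matrix.mul_apply]

lemma cancel_left {a b p : ℕ} {P : Matrix (Fin a) (Fin b) ℝ} {Q : Matrix (Fin b) (Fin a) ℝ}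
    (h : P * Q = 1) (X : Matrix (Fin a) (Fin p) ℝ) : P * (Q * X) = X := by
  rw [← Matrix.mul_assoc, h, Matrix.one_mul]

theorem stmt4 (m n r k : ℕ) (μ₂ : ℝ)
    (L : Matrix (Fin m) (Fin n) ℝ)
    (W : Matrix (Fin m) (Fin r) ℝ) (σ : Fin r → ℝ) (V : Matrix (Fin n) (Fin r) ℝ)
    (hW : Wᵀ * W = 1) (hV : Vᵀ * V = 1) (hσ : ∀ i, 0 < σ i)
    (hL : L = W * Matrix.diagonal σ * Vᵀ)
    (hrank : L.rank = r)
    (hinc : ∀ i, rowNorm V i ≤ Real.sqrt (μ₂ * r / n))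
    (g : Fin k → Fin n) (hg : Function.Injective g)
    (C : Matrix (Fin m) (Fin k) ℝ) (hC : C = L.submatrix id g)
    (hCrank : C.rank = r)
    (Cd : Matrix (Fin k) (Fin m) ℝ) (hCd : IsMPInv C Cd)
    (Ld : Matrix (Fin n) (Fin m) ℝ) (hLd : IsMPInv L Ld)
    (VJd : Matrix (Fin r) (Fin k) ℝ) (hVJd : IsMPInv (V.submatrix g id) VJd) :
    specNorm C * specNorm Cd ≤
      Real.sqrt (μ₂ * r) * (specNorm L * specNorm Ld) * (Real.sqrt ((k : ℝ) / n) * specNorm VJd) := by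
  set VJ : Matrix (Fin k) (Fin r) ℝ := V.submatrix g id with hVJ
  set Sg : Matrix (Fin r) (Fin r) ℝ := Matrix.diagonal σ with hSg
  set Si : Matrix (Fin r) (Fin r) ℝ := Matrix.diagonal (fun i => (σ i)⁻¹) with hSi
  have hSgi : Sg * Si = 1 := by
    rw [hSg, hSi, Matrix.diagonal_mul_diagonal]
    convert Matrix.diagonal_one with i
    exact mul_inv_cancel₀ (hσ i).ne'
  have hSim : Si * Sg = 1 := by
    rw [hSg, hSi, Matrix.diagonal_mul_diagonal]
    convert Matrix.diagonal_one with i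
    exact inv_mul_cancel₀ (hσ i).ne'
  -- factorization of C
  have hCfac : C = W * Sg * VJᵀ := by
    rw [hC, hL, submatrix_mul_right, ← Matrix.transpose_submatrix]
  -- rank of VJ
  have hVJrank : VJ.rank = r := by
    apply le_antisymm (Matrix.rank_le_width VJ)
    calc r = C.rank := hCrank.symm
      _ ≤ (VJᵀ).rank := by rw [hCfac]; exact Matrix.rank_mul_le_right (W * Sg) VJᵀ
      _ = VJ.rank := Matrix.rank_transpose VJ
  -- VJ has a left inverse: VJd * VJ = 1
  have hG : IsUnit (VJᵀ * VJ) := by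
    apply isUnit_of_rank_eq
    rw [Matrix.rank_transpose_mul_self, hVJrank]
  have hVJl : VJd * VJ = 1 := by
    obtain ⟨G, hGe⟩ := hG
    have hNG : (↑G⁻¹ : Matrix (Fin r) (Fin r) ℝ) * (VJᵀ * VJ) = 1 := by
      rw [← hGe]; exact G.inv_mul
    have hzero : VJ * (VJd * VJ - 1) = 0 := by
      rw [Matrix.mul_sub, Matrix.mul_one, ← Matrix.mul_assoc, hVJd.1, sub_self]
    have hkey : VJd * VJ - 1 = (↑G⁻¹ : Matrix (Fin r) (Fin r) ℝ) *
        (VJᵀ * (VJ * (VJd * VJ - 1))) := by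
      rw [← Matrix.mul_assoc VJᵀ VJ _, ← Matrix.mul_assoc, hNG, Matrix.one_mul]
    rw [hzero, Matrix.mul_zero, Matrix.mul_zero] at hkey
    have := sub_eq_zero.mp hkey
    exact this
  have hVJt : VJᵀ * VJdᵀ = 1 := by
    rw [← Matrix.transpose_mul, hVJl, Matrix.transpose_one]
  -- extraction of Sg and Si
  have hSgL : Sg = Wᵀ * (L * V) := by
    rw [hL]
    simp only [Matrix.mul_assoc]
    simp only [cancel_left hW, cancel_left hV, hV, Matrix.mul_one]
  have hSiLd : Si = Vᵀ * (Ld * W) := by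
    have h0 : Si * (Wᵀ * ((L * Ld * L) * (V * Si))) = Si * (Wᵀ * (L * (V * Si))) := by
      rw [hLd.1]
    rw [hL] at h0
    simp only [Matrix.mul_assoc] at h0
    simp only [cancel_left hW, cancel_left hV, cancel_left hSim, cancel_left hSgi,
      hSgi, hW, hV, Matrix.mul_one] at h0
    exact h0.symm
  -- Cd equals VJdᵀ * Si * Wᵀ
  have hCdfac : Cd = VJdᵀ * Si * Wᵀ := by
    apply mpinv_unique hCd
    have hCD : C * (VJdᵀ * Si * Wᵀ) = W * Wᵀ := by
      rw [hCfac]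
      simp only [Matrix.mul_assoc]
      simp only [cancel_left hVJt, cancel_left hSgi]
    have hDC : (VJdᵀ * Si * Wᵀ) * C = VJdᵀ * VJᵀ := by
      rw [hCfac]
      simp only [Matrix.mul_assoc]
      simp only [cancel_left hW, cancel_left hSim]
    refine ⟨?_, ?_, ?_, ?_⟩
    · rw [hCD, hCfac]
      simp only [Matrix.mul_assoc]
      simp only [cancel_left hW]
    · rw [Matrix.mul_assoc (VJdᵀ * Si * Wᵀ) C _, hCD]
      simp only [Matrix.mul_assoc]
      simp only [cancel_left hW]
    · rw [hCD, Matrix.transpose_mul, Matrix.transpose_transpose]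
    · rw [hDC, ← Matrix.transpose_mul, Matrix.transpose_transpose, hVJd.2.2.1]
  -- norm bounds
  simp only [specNorm_eq_l2]
  have nW : ‖W‖ ≤ 1 := norm_le_one_of_orth W hW
  have nV : ‖V‖ ≤ 1 := norm_le_one_of_orth V hV
  have nWt : ‖Wᵀ‖ ≤ 1 := by rw [l2_transpose]; exact nW
  have nVt : ‖Vᵀ‖ ≤ 1 := by rw [l2_transpose]; exact nV
  have nL : (0:ℝ) ≤ ‖L‖ := norm_nonneg _
  have nLd : (0:ℝ) ≤ ‖Ld‖ := norm_nonneg _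
  have nVJd : (0:ℝ) ≤ ‖VJd‖ := norm_nonneg _
  have nSg : ‖Sg‖ ≤ ‖L‖ := by
    rw [hSgL]
    calc ‖Wᵀ * (L * V)‖ ≤ ‖Wᵀ‖ * ‖L * V‖ := Matrix.l2_opNorm_mul _ _
      _ ≤ 1 * ‖L * V‖ := mul_le_mul_of_nonneg_right nWt (norm_nonneg _)
      _ = ‖L * V‖ := one_mul _
      _ ≤ ‖L‖ * ‖V‖ := Matrix.l2_opNorm_mul _ _
      _ ≤ ‖L‖ * 1 := mul_le_mul_of_nonneg_left nV nL
      _ = ‖L‖ := mul_one _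
  have nSi : ‖Si‖ ≤ ‖Ld‖ := by
    rw [hSiLd]
    calc ‖Vᵀ * (Ld * W)‖ ≤ ‖Vᵀ‖ * ‖Ld * W‖ := Matrix.l2_opNorm_mul _ _
      _ ≤ 1 * ‖Ld * W‖ := mul_le_mul_of_nonneg_right nVt (norm_nonneg _)
      _ = ‖Ld * W‖ := one_mul _
      _ ≤ ‖Ld‖ * ‖W‖ := Matrix.l2_opNorm_mul _ _
      _ ≤ ‖Ld‖ * 1 := mul_le_mul_of_nonneg_left nW nLd
      _ = ‖Ld‖ := mul_one _
  set b : ℝ := Real.sqrt (μ₂ * r / n) with hb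
  have hb0 : 0 ≤ b := Real.sqrt_nonneg _
  have nVJ : ‖VJ‖ ≤ Real.sqrt k * b := by
    apply norm_le_of_rows _ _ hb0
    intro i
    exact hinc (g i)
  have nC : ‖C‖ ≤ ‖L‖ * (Real.sqrt k * b) := by
    rw [hCfac]
    calc ‖W * Sg * VJᵀ‖ ≤ ‖W * Sg‖ * ‖VJᵀ‖ := Matrix.l2_opNorm_mul _ _
      _ ≤ (‖W‖ * ‖Sg‖) * ‖VJᵀ‖ :=
          mul_le_mul_of_nonneg_right (Matrix.l2_opNorm_mul _ _) (norm_nonneg _)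
      _ ≤ (1 * ‖L‖) * ‖VJᵀ‖ := by
          apply mul_le_mul_of_nonneg_right _ (norm_nonneg _)
          exact mul_le_mul nW nSg (norm_nonneg _) zero_le_one
      _ = ‖L‖ * ‖VJ‖ := by rw [one_mul, l2_transpose]
      _ ≤ ‖L‖ * (Real.sqrt k * b) := mul_le_mul_of_nonneg_left nVJ nL
  have nCd : ‖Cd‖ ≤ ‖VJd‖ * ‖Ld‖ := by
    rw [hCdfac]
    calc ‖VJdᵀ * Si * Wᵀ‖ ≤ ‖VJdᵀ * Si‖ * ‖Wᵀ‖ := Matrix.l2_opNorm_mul _ _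
      _ ≤ ‖VJdᵀ * Si‖ * 1 := mul_le_mul_of_nonneg_left nWt (norm_nonneg _)
      _ = ‖VJdᵀ * Si‖ := mul_one _
      _ ≤ ‖VJdᵀ‖ * ‖Si‖ := Matrix.l2_opNorm_mul _ _
      _ = ‖VJd‖ * ‖Si‖ := by rw [l2_transpose]
      _ ≤ ‖VJd‖ * ‖Ld‖ := mul_le_mul_of_nonneg_left nSi nVJd
  -- arithmetic with square roots
  have hbt : Real.sqrt k * b ≤ Real.sqrt (μ₂ * r) * Real.sqrt ((k:ℝ) / n) := by
    rcases le_or_gt 0 (μ₂ * r) with hpos | hneg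
    · rw [hb, ← Real.sqrt_mul (Nat.cast_nonneg k),
        show (k:ℝ) * (μ₂ * r / n) = (μ₂ * r) * ((k:ℝ) / n) by ring,
        Real.sqrt_mul hpos]
    · have hnp : μ₂ * r / n ≤ 0 :=
        div_nonpos_iff.mpr (Or.inr ⟨le_of_lt hneg, Nat.cast_nonneg n⟩)
      rw [hb, Real.sqrt_eq_zero_of_nonpos hnp, mul_zero]
      positivity
  calc ‖C‖ * ‖Cd‖ ≤ (‖L‖ * (Real.sqrt k * b)) * (‖VJd‖ * ‖Ld‖) := by
        apply mul_le_mul nC nCd (norm_nonneg _)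
        positivity
    _ = (Real.sqrt k * b) * (‖L‖ * ‖Ld‖ * ‖VJd‖) := by ring
    _ ≤ (Real.sqrt (μ₂ * r) * Real.sqrt ((k:ℝ) / n)) * (‖L‖ * ‖Ld‖ * ‖VJd‖) := by
        apply mul_le_mul_of_nonneg_right hbt
        positivity
    _ = Real.sqrt (μ₂ * r) * (‖L‖ * ‖Ld‖) * (Real.sqrt ((k:ℝ) / n) * ‖VJd‖) := by ring
end

section
/- Let L ∈ ℝ^{m×n} have rank r satisfying the incoherence assumption with parameters μ₁, μ₂, and let J ⊆ [n] be such that C = L(:,J) has rank r. Define β = √(|J|/n) · ‖(V(J,:))†‖₂ where V is the matrix of right singular vectors of L. Then the incoherence parameters of C satisfy μ₁(C) ≤ μ₁(L) and μ₂(C) ≤ β² κ(L)² μ₂(L). -/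
open Matrix BigOperators MeasureTheory

/-!
Since `C = W Σ V_Jᵀ` with `V_J = V(J,:)`, the columns of `W_C` lie in the column space of `W` and
those of `V_C` in the column space of `V_J`. If `X` has orthonormal columns inside the column space
of `B` and `B B' B = B`, then `X = B (B' X)`, and the `i`-th row of `X` has norm at most
`‖B' X‖₂ ≤ ‖B'‖₂` times that of `B`. With `B' = Wᵀ` this gives the bound for `W_C`; with
`B' = V_J†` it gives `‖V_C(i,:)‖ ≤ ‖V_J†‖₂ ‖V(J(i),:)‖`, and the factor `κ(L) ≥ 1` (from
`L L† L = L`) only weakens the bound.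
-/

open scoped Matrix.Norms.L2Operator

section L2OpNorm

variable {m n p : ℕ}

lemma specNorm_eq_l2_opNorm (A : Matrix (Fin m) (Fin n) ℝ) : specNorm A = ‖A‖ := rfl

lemma rowNorm_eq_norm_toLp (A : Matrix (Fin m) (Fin n) ℝ) (i : Fin m) :
    rowNorm A i = ‖WithLp.toLp 2 (A i)‖ := by
  simp [rowNorm, EuclideanSpace.norm_eq]

lemma l2_opNorm_transpose (A : Matrix (Fin m) (Fin n) ℝ) : ‖Aᵀ‖ = ‖A‖ := by
  rw [← conjTranspose_eq_transpose_of_trivial, l2_opNorm_conjTranspose]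

lemma l2_opNorm_one_le : ‖(1 : Matrix (Fin n) (Fin n) ℝ)‖ ≤ 1 := by
  have h := l2_opNorm_conjTranspose_mul_self (1 : Matrix (Fin n) (Fin n) ℝ)
  rw [conjTranspose_one, Matrix.one_mul] at h
  nlinarith [norm_nonneg (1 : Matrix (Fin n) (Fin n) ℝ)]

lemma l2_opNorm_le_one_of_transpose_mul_self {Q : Matrix (Fin m) (Fin n) ℝ}
    (hQ : Qᵀ * Q = 1) : ‖Q‖ ≤ 1 := by
  have h := l2_opNorm_conjTranspose_mul_self Q
  rw [conjTranspose_eq_transpose_of_trivial, hQ] at h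
  nlinarith [norm_nonneg Q, l2_opNorm_one_le (n := n)]

lemma one_le_l2_opNorm_mul_of_mul_mul_self {A : Matrix (Fin m) (Fin n) ℝ}
    {B : Matrix (Fin n) (Fin m) ℝ} (h : A * B * A = A) (hA : A ≠ 0) : 1 ≤ ‖A‖ * ‖B‖ := by
  have hpos : 0 < ‖A‖ := norm_pos_iff.mpr hA
  have : ‖A‖ ≤ ‖A‖ * ‖B‖ * ‖A‖ :=
    calc ‖A‖ = ‖A * B * A‖ := by rw [h]
      _ ≤ ‖A‖ * ‖B‖ * ‖A‖ :=
        (l2_opNorm_mul _ _).trans (by gcongr; exact l2_opNorm_mul _ _)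
  nlinarith

lemma rowNorm_mul_le (A : Matrix (Fin m) (Fin n) ℝ) (B : Matrix (Fin n) (Fin p) ℝ)
    (i : Fin m) : rowNorm (A * B) i ≤ ‖B‖ * rowNorm A i := by
  have h := l2_opNorm_mulVec Bᵀ (WithLp.toLp 2 (A i))
  rw [l2_opNorm_transpose, mulVec_transpose] at h
  rwa [rowNorm_eq_norm_toLp, rowNorm_eq_norm_toLp]

lemma rowNorm_le_of_eq_mul {X : Matrix (Fin m) (Fin p) ℝ} {B : Matrix (Fin m) (Fin n) ℝ}
    {Bd : Matrix (Fin n) (Fin m) ℝ} (M : Matrix (Fin n) (Fin p) ℝ)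
    (hB : B * Bd * B = B) (hX : Xᵀ * X = 1) (h : X = B * M) (i : Fin m) :
    rowNorm X i ≤ ‖Bd‖ * rowNorm B i := by
  have hproj : X = B * (Bd * X) := by
    conv_lhs => rw [h, ← hB]
    rw [h]; simp only [Matrix.mul_assoc]
  calc rowNorm X i = rowNorm (B * (Bd * X)) i := by rw [← hproj]
    _ ≤ ‖Bd * X‖ * rowNorm B i := rowNorm_mul_le _ _ _
    _ ≤ ‖Bd‖ * rowNorm B i := by
      gcongr
      · exact Real.sqrt_nonneg _
      calc ‖Bd * X‖ ≤ ‖Bd‖ * ‖X‖ := l2_opNorm_mul _ _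
        _ ≤ ‖Bd‖ := mul_le_of_le_one_right (norm_nonneg _)
            (l2_opNorm_le_one_of_transpose_mul_self hX)

end L2OpNorm

section SVD

variable {m k r : ℕ} {C : Matrix (Fin m) (Fin k) ℝ} {U : Matrix (Fin m) (Fin r) ℝ}
  {σ : Fin r → ℝ} {V : Matrix (Fin k) (Fin r) ℝ}

lemma left_factor_eq_of_eq_svd (hV : Vᵀ * V = 1) (hσ : ∀ i, σ i ≠ 0)
    (hC : C = U * diagonal σ * Vᵀ) : U = C * (V * diagonal σ⁻¹) := by
  have hinv : diagonal σ * diagonal σ⁻¹ = 1 := by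
    rw [diagonal_mul_diagonal, ← diagonal_one]
    exact congrArg diagonal (funext fun i => mul_inv_cancel₀ (hσ i))
  rw [hC, Matrix.mul_assoc, Matrix.mul_assoc, ← Matrix.mul_assoc Vᵀ, hV, Matrix.one_mul, hinv,
    Matrix.mul_one]

lemma right_factor_eq_of_eq_svd (hU : Uᵀ * U = 1) (hσ : ∀ i, σ i ≠ 0)
    (hC : C = U * diagonal σ * Vᵀ) : V = Cᵀ * (U * diagonal σ⁻¹) := by
  refine left_factor_eq_of_eq_svd hU hσ ?_
  rw [hC, transpose_mul, transpose_mul, transpose_transpose, diagonal_transpose,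
    Matrix.mul_assoc]

end SVD

lemma sqrt_mul_sq_div_eq {k n : ℕ} (hk : k ≠ 0) {s κ β c : ℝ} (hs : 0 ≤ s) (hκ : 0 ≤ κ)
    (hβ : β = Real.sqrt ((k : ℝ) / n) * s) :
    Real.sqrt (β ^ 2 * κ ^ 2 * c / k) = κ * s * Real.sqrt (c / n) := by
  have hsq : β ^ 2 * κ ^ 2 * c / k = (κ * s) ^ 2 * (c / n) := by
    rw [hβ, mul_pow, Real.sq_sqrt (by positivity)]
    field_simp
  rw [hsq, Real.sqrt_mul (sq_nonneg _), Real.sqrt_sq (by positivity)]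

theorem stmt5_general (m n r k : ℕ) (μ₁ μ₂ : ℝ)
    (L : Matrix (Fin m) (Fin n) ℝ)
    (W : Matrix (Fin m) (Fin r) ℝ) (σ : Fin r → ℝ) (V : Matrix (Fin n) (Fin r) ℝ)
    (hW : Wᵀ * W = 1)
    (hL : L = W * Matrix.diagonal σ * Vᵀ)
    (hrank : L.rank = r)
    (hinc1 : ∀ i, rowNorm W i ≤ Real.sqrt (μ₁ * r / m))
    (hinc2 : ∀ i, rowNorm V i ≤ Real.sqrt (μ₂ * r / n))
    (g : Fin k → Fin n)
    (C : Matrix (Fin m) (Fin k) ℝ) (hC : C = L.submatrix id g)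
    (Ld : Matrix (Fin n) (Fin m) ℝ) (hLd : IsMPInv L Ld)
    (VJd : Matrix (Fin r) (Fin k) ℝ) (hVJd : IsMPInv (V.submatrix g id) VJd)
    (β : ℝ) (hβ : β = Real.sqrt ((k : ℝ) / n) * specNorm VJd) :
    ∀ (WC : Matrix (Fin m) (Fin r) ℝ) (σC : Fin r → ℝ) (VC : Matrix (Fin k) (Fin r) ℝ),
      WCᵀ * WC = 1 → VCᵀ * VC = 1 → (∀ i, 0 < σC i) →
      C = WC * Matrix.diagonal σC * VCᵀ →
      (∀ i, rowNorm WC i ≤ Real.sqrt (μ₁ * r / m)) ∧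
      (∀ i, rowNorm VC i ≤
        Real.sqrt (β ^ 2 * (specNorm L * specNorm Ld) ^ 2 * μ₂ * r / k)) := by
  intro WC σC VC hWC hVC hσC hCsvd
  have hσC' : ∀ i, σC i ≠ 0 := fun i => (hσC i).ne'
  have hCW : C = W * (diagonal σ * (V.submatrix g id)ᵀ) := by
    rw [hC, hL, ← Matrix.mul_assoc]; rfl
  refine ⟨fun i => ?_, fun i => ?_⟩
  · have hWWW : W * Wᵀ * W = W := by rw [Matrix.mul_assoc, hW, Matrix.mul_one]
    calc rowNorm WC i ≤ ‖Wᵀ‖ * rowNorm W i := rowNorm_le_of_eq_mul _ hWWW hWC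
          (by rw [left_factor_eq_of_eq_svd hVC hσC' hCsvd, hCW, Matrix.mul_assoc]) i
      _ ≤ rowNorm W i := mul_le_of_le_one_left (Real.sqrt_nonneg _)
          (l2_opNorm_transpose W ▸ l2_opNorm_le_one_of_transpose_mul_self hW)
      _ ≤ _ := hinc1 i
  · have hrow : rowNorm VC i ≤ ‖VJd‖ * rowNorm V (g i) :=
      rowNorm_le_of_eq_mul (diagonal σ * (Wᵀ * (WC * diagonal σC⁻¹))) hVJd.1 hVC (by
        rw [right_factor_eq_of_eq_svd hWC hσC' hCsvd, hCW]
        simp only [transpose_mul, transpose_transpose, diagonal_transpose, Matrix.mul_assoc]) i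
    simp only [specNorm_eq_l2_opNorm] at hβ ⊢
    set κ := ‖L‖ * ‖Ld‖
    have hκ : ‖VJd‖ * rowNorm V (g i) ≤ κ * (‖VJd‖ * rowNorm V (g i)) := by
      rcases eq_or_ne L 0 with hL0 | hL0
      · obtain rfl : r = 0 := by rw [← hrank, hL0, rank_zero]
        simp [rowNorm]
      · exact le_mul_of_one_le_left (mul_nonneg (norm_nonneg _) (Real.sqrt_nonneg _))
          (one_le_l2_opNorm_mul_of_mul_mul_self hLd.1 hL0)
    calc rowNorm VC i ≤ κ * (‖VJd‖ * rowNorm V (g i)) := hrow.trans hκ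
      _ ≤ κ * ‖VJd‖ * Real.sqrt (μ₂ * r / n) := by
        rw [← mul_assoc]; exact mul_le_mul_of_nonneg_left (hinc2 _) (by positivity)
      _ = _ := by
        rw [mul_assoc _ μ₂, sqrt_mul_sq_div_eq (Fin.pos i).ne' (norm_nonneg _) (by positivity) hβ]

theorem stmt5 (m n r k : ℕ) (μ₁ μ₂ : ℝ)
    (L : Matrix (Fin m) (Fin n) ℝ)
    (W : Matrix (Fin m) (Fin r) ℝ) (σ : Fin r → ℝ) (V : Matrix (Fin n) (Fin r) ℝ)
    (hW : Wᵀ * W = 1) (hV : Vᵀ * V = 1) (hσ : ∀ i, 0 < σ i)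
    (hL : L = W * Matrix.diagonal σ * Vᵀ)
    (hrank : L.rank = r)
    (hinc1 : ∀ i, rowNorm W i ≤ Real.sqrt (μ₁ * r / m))
    (hinc2 : ∀ i, rowNorm V i ≤ Real.sqrt (μ₂ * r / n))
    (g : Fin k → Fin n) (hg : Function.Injective g)
    (C : Matrix (Fin m) (Fin k) ℝ) (hC : C = L.submatrix id g)
    (hCrank : C.rank = r)
    (Ld : Matrix (Fin n) (Fin m) ℝ) (hLd : IsMPInv L Ld)
    (VJd : Matrix (Fin r) (Fin k) ℝ) (hVJd : IsMPInv (V.submatrix g id) VJd)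
    (β : ℝ) (hβ : β = Real.sqrt ((k : ℝ) / n) * specNorm VJd) :
    ∀ (WC : Matrix (Fin m) (Fin r) ℝ) (σC : Fin r → ℝ) (VC : Matrix (Fin k) (Fin r) ℝ),
      WCᵀ * WC = 1 → VCᵀ * VC = 1 → (∀ i, 0 < σC i) →
      C = WC * Matrix.diagonal σC * VCᵀ →
      (∀ i, rowNorm WC i ≤ Real.sqrt (μ₁ * r / m)) ∧
      (∀ i, rowNorm VC i ≤
        Real.sqrt (β ^ 2 * (specNorm L * specNorm Ld) ^ 2 * μ₂ * r / k)) :=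
  stmt5_general m n r k μ₁ μ₂ L W σ V hW hL hrank hinc1 hinc2 g C hC Ld hLd VJd hVJd β hβ
end
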